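/- arXiv:1201.3056 — 6 statements merged into one kernel-verified Lean document; each statement's English description precedes it below -/
import Mathlib

section
/- (Lemma 1, middle case.) If b·(b·P/(Q·F) + 1)⁻² < λ < b, then the unique maximizer of u over [0, P] is x* = (Q·F/√b)·(1/√λ − 1/√b), which lies in (0, P), and the maximum value is u(x*) = Q·F·(1 − √(λ/b))² + u₀. -/
/-!
Writing `d = (Q·F + 1)/G`, the purchased rate is `Q·F·x/(x + d)` and `b·d = Q·F`, so up to the
constant `u₀` the utility is `b·d·x/(x + d) − λ·x`. Completing the square in `s = x + d` gives the
vertex form `d·(√b − √λ)² − λ·(x − x*)²/(x + d)` with `x* = d·(√b/√λ − 1)`, from which maximality,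
uniqueness and the maximum value can be read off; the bounds on `λ` say exactly that `0 < x* < P`.
-/

open Real

theorem isMaxOn_of_eq_sub_mul_sq {f w : ℝ → ℝ} {S : Set ℝ} {M x₀ : ℝ}
    (hw : ∀ x ∈ S, 0 < w x) (hf : ∀ x ∈ S, f x = M - w x * (x - x₀) ^ 2) (hx₀ : x₀ ∈ S) :
    IsMaxOn f S x₀ := fun x hx => show f x ≤ f x₀ by
  rw [hf x hx, hf x₀ hx₀, sub_self, zero_pow two_ne_zero, mul_zero, sub_zero]
  exact sub_le_self M (mul_nonneg (hw x hx).le (sq_nonneg _))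

theorem eq_of_isMaxOn_of_eq_sub_mul_sq {f w : ℝ → ℝ} {S : Set ℝ} {M x₀ y : ℝ}
    (hw : ∀ x ∈ S, 0 < w x) (hf : ∀ x ∈ S, f x = M - w x * (x - x₀) ^ 2) (hx₀ : x₀ ∈ S)
    (hy : y ∈ S) (hmax : IsMaxOn f S y) : y = x₀ := by
  have hle : f x₀ ≤ f y := hmax hx₀
  rw [hf y hy, hf x₀ hx₀, sub_self, zero_pow two_ne_zero, mul_zero] at hle
  have hsq : (y - x₀) ^ 2 = 0 :=
    le_antisymm (nonpos_of_mul_nonpos_right (by linarith) (hw y hy)) (sq_nonneg _)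
  exact sub_eq_zero.mp (pow_eq_zero_iff two_ne_zero |>.mp hsq)

theorem sq_mul_mul_div_add_sub_sq_mul_eq {β ℓ d x : ℝ} (hℓ : ℓ ≠ 0) (hx : x + d ≠ 0) :
    β ^ 2 * d * x / (x + d) - ℓ ^ 2 * x
      = d * (β - ℓ) ^ 2 - ℓ ^ 2 / (x + d) * (x - d * (β / ℓ - 1)) ^ 2 := by
  field_simp
  ring

theorem mul_sqrt_div_sqrt_sub_one_mem_Ioo {b d lam P : ℝ} (hd : 0 < d) (hlam : 0 < lam)
    (hP : 0 < P) (hhigh : lam < b) (hlow : b * ((P / d + 1) ^ 2)⁻¹ < lam) :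
    d * (√b / √lam - 1) ∈ Set.Ioo 0 P := by
  have hsl : 0 < √lam := sqrt_pos.mpr hlam
  have hA : 0 < P / d + 1 := by positivity
  have hslb : √lam < √b := sqrt_lt_sqrt hlam.le hhigh
  have hsb : √b < √lam * (P / d + 1) := by
    rw [← div_eq_mul_inv, div_lt_iff₀ (by positivity)] at hlow
    simpa only [sqrt_mul hlam.le, sqrt_sq hA.le] using sqrt_lt_sqrt (by linarith) hlow
  have hratio : 1 < √b / √lam := (one_lt_div hsl).mpr hslb
  constructor
  · exact mul_pos hd (by linarith)
  · have : √b / √lam < P / d + 1 := by rw [div_lt_iff₀ hsl]; linarith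
    rwa [← sub_lt_iff_lt_add, lt_div_iff₀ hd, mul_comm] at this

theorem stmt_4_general (Q F G H lam P : ℝ) (hQ : 0 < Q) (hF : 0 < F) (hG : 0 < G)
    (hlam : 0 < lam) (hP : 0 < P)
    (u : ℝ → ℝ) (hu : ∀ x, u x = Q * x * F * G / (x * G + Q * F + 1) + Q * H - lam * x)
    (b : ℝ) (hb : b = Q * F * G / (Q * F + 1))
    (hlow : b * ((b * P / (Q * F) + 1) ^ 2)⁻¹ < lam) (hhigh : lam < b)
    (xstar : ℝ) (hxstar : xstar = (Q * F / Real.sqrt b) * (1 / Real.sqrt lam - 1 / Real.sqrt b)) :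
    xstar ∈ Set.Ioo 0 P ∧
    IsMaxOn u (Set.Icc 0 P) xstar ∧
    (∀ y ∈ Set.Icc (0 : ℝ) P, IsMaxOn u (Set.Icc 0 P) y → y = xstar) ∧
    u xstar = Q * F * (1 - Real.sqrt (lam / b)) ^ 2 + Q * H := by
  set d := (Q * F + 1) / G with hd_def
  have hd : 0 < d := by positivity
  have hbpos : 0 < b := by rw [hb]; positivity
  have hbd : Q * F = b * d := by rw [hb, hd_def]; field_simp
  have hsb : 0 < √b := sqrt_pos.mpr hbpos
  have hsl : 0 < √lam := sqrt_pos.mpr hlam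
  have hb2 : √b ^ 2 = b := sq_sqrt hbpos.le
  have hx : xstar = d * (√b / √lam - 1) := by
    rw [hxstar, hbd]
    field_simp
    linear_combination (√lam - √b) * hb2
  have hmem : xstar ∈ Set.Ioo 0 P := by
    rw [hx]
    refine mul_sqrt_div_sqrt_sub_one_mem_Ioo hd hlam hP hhigh ?_
    rwa [hbd, mul_div_mul_left _ _ hbpos.ne'] at hlow
  have hpos : ∀ x ∈ Set.Icc 0 P, 0 < lam / (x + d) := fun x hx => by
    have := hx.1; positivity
  have hvertex : ∀ x ∈ Set.Icc 0 P,
      u x = d * (√b - √lam) ^ 2 + Q * H - lam / (x + d) * (x - xstar) ^ 2 := fun x hx' => by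
    have hxd : 0 < x + d := by linarith [hx'.1]
    have hrate : Q * x * F * G / (x * G + Q * F + 1) = b * d * x / (x + d) := by
      rw [← hbd, hd_def]; field_simp; ring
    have hform := sq_mul_mul_div_add_sub_sq_mul_eq (β := √b) hsl.ne' hxd.ne'
    rw [hb2, sq_sqrt hlam.le] at hform
    rw [hu, hrate, hx, add_sub_right_comm, hform]
    ring
  have hIcc : xstar ∈ Set.Icc 0 P := Set.Ioo_subset_Icc_self hmem
  refine ⟨hmem, isMaxOn_of_eq_sub_mul_sq hpos hvertex hIcc,
    fun y hy hmax => eq_of_isMaxOn_of_eq_sub_mul_sq hpos hvertex hIcc hy hmax, ?_⟩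
  have hmax : b * d * (1 - √lam / √b) ^ 2 = d * (√b - √lam) ^ 2 := by
    field_simp
    linear_combination (-(√b - √lam) ^ 2) * hb2
  rw [hvertex xstar hIcc, sub_self, zero_pow two_ne_zero, mul_zero, sub_zero, hbd,
    sqrt_div hlam.le, hmax]

/-- Lemma 1, middle case: If `b·(b·P/(Q·F) + 1)⁻² < λ < b`, then the unique
maximizer of `u` over `[0, P]` is `x* = (Q·F/√b)·(1/√λ − 1/√b)`, which lies in `(0, P)`,
and the maximum value is `u(x*) = Q·F·(1 − √(λ/b))² + u₀`. -/
theorem stmt_4 (Q F G H lam P : ℝ) (hQ : 0 < Q) (hF : 0 < F) (hG : 0 < G)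
    (hH : 0 ≤ H) (hlam : 0 < lam) (hP : 0 < P)
    (u : ℝ → ℝ) (hu : ∀ x, u x = Q * x * F * G / (x * G + Q * F + 1) + Q * H - lam * x)
    (b : ℝ) (hb : b = Q * F * G / (Q * F + 1))
    (hlow : b * ((b * P / (Q * F) + 1) ^ 2)⁻¹ < lam) (hhigh : lam < b)
    (xstar : ℝ) (hxstar : xstar = (Q * F / Real.sqrt b) * (1 / Real.sqrt lam - 1 / Real.sqrt b)) :
    xstar ∈ Set.Ioo 0 P ∧
    IsMaxOn u (Set.Icc 0 P) xstar ∧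
    (∀ y ∈ Set.Icc (0 : ℝ) P, IsMaxOn u (Set.Icc 0 P) y → y = xstar) ∧
    u xstar = Q * F * (1 - Real.sqrt (lam / b)) ^ 2 + Q * H :=
  stmt_4_general Q F G H lam P hQ hF hG hlam hP u hu b hb hlow hhigh xstar hxstar
end

section
/- (Lemma 2.) For a fixed relay power price λ > 0, fixed G > 0, and fixed relay power budget P > 0, the ideal power demand P^I(λ) = max{0, min( ((Q·F + 1)/G)·(√(G/(λ·(1 + 1/(Q·F)))) − 1), P )} is a nondecreasing function of the user transmit power Q > 0 and a nondecreasing function of the squared user–relay channel gain F > 0. -/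
/-- Lemma 2: For a fixed relay power price `λ > 0`, fixed `G > 0`, and
fixed relay power budget `P > 0`, the ideal power demand
`P^I = max{0, min( ((Q·F + 1)/G)·(√(G/(λ·(1 + 1/(Q·F)))) − 1), P )}` is a nondecreasing
function of the user transmit power `Q > 0` and a nondecreasing function of the squared
user–relay channel gain `F > 0`. -/
theorem stmt_6 (G P lam : ℝ) (hG : 0 < G) (hP : 0 < P) (hlam : 0 < lam)
    (PI : ℝ → ℝ → ℝ)
    (hPI : ∀ Q F : ℝ, PI Q F =
      max 0 (min (((Q * F + 1) / G) * (Real.sqrt (G / (lam * (1 + 1 / (Q * F)))) - 1)) P)) :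
    (∀ F : ℝ, 0 < F → ∀ Q₁ Q₂ : ℝ, 0 < Q₁ → Q₁ ≤ Q₂ → PI Q₁ F ≤ PI Q₂ F) ∧
    (∀ Q : ℝ, 0 < Q → ∀ F₁ F₂ : ℝ, 0 < F₁ → F₁ ≤ F₂ → PI Q F₁ ≤ PI Q F₂) := by
  have key : ∀ x₁ x₂ : ℝ, 0 < x₁ → x₁ ≤ x₂ →
      max 0 (min (((x₁ + 1) / G) * (Real.sqrt (G / (lam * (1 + 1 / x₁))) - 1)) P) ≤
      max 0 (min (((x₂ + 1) / G) * (Real.sqrt (G / (lam * (1 + 1 / x₂))) - 1)) P) := by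
    intro x₁ x₂ hx₁ hle
    have hx₂ : 0 < x₂ := lt_of_lt_of_le hx₁ hle
    set f₁ := ((x₁ + 1) / G) * (Real.sqrt (G / (lam * (1 + 1 / x₁))) - 1) with hf₁
    set f₂ := ((x₂ + 1) / G) * (Real.sqrt (G / (lam * (1 + 1 / x₂))) - 1) with hf₂
    by_cases hpos : 0 < f₁
    · -- then sqrt term exceeds 1, and everything is monotone
      have hd₂ : 0 < lam * (1 + 1 / x₂) := by positivity
      have hd₁ : 0 < lam * (1 + 1 / x₁) := by positivity
      have hsle : Real.sqrt (G / (lam * (1 + 1 / x₁))) ≤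
          Real.sqrt (G / (lam * (1 + 1 / x₂))) := by
        apply Real.sqrt_le_sqrt
        apply div_le_div_of_nonneg_left hG.le hd₂
        have : 1 / x₂ ≤ 1 / x₁ := one_div_le_one_div_of_le hx₁ hle
        nlinarith
      have hc₁ : 0 < (x₁ + 1) / G := by positivity
      have hs₁ : 0 < Real.sqrt (G / (lam * (1 + 1 / x₁))) - 1 := by
        by_contra h
        push_neg at h
        have : f₁ ≤ 0 := mul_nonpos_of_nonneg_of_nonpos hc₁.le h
        linarith
      have hf : f₁ ≤ f₂ := by
        apply mul_le_mul
        · gcongr <;> linarith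
        · linarith
        · linarith
        · positivity
      exact max_le_max le_rfl (min_le_min hf le_rfl)
    · push_neg at hpos
      calc max 0 (min f₁ P) ≤ max 0 (0 : ℝ) := by
              apply max_le_max le_rfl
              exact le_trans (min_le_left _ _) hpos
        _ ≤ _ := by simp [le_max_left]
  constructor
  · intro F hF Q₁ Q₂ hQ₁ hle
    rw [hPI, hPI]
    exact key _ _ (by positivity) (by nlinarith)
  · intro Q hQ F₁ F₂ hF₁ hle
    rw [hPI, hPI]
    exact key _ _ (by positivity) (by nlinarith)
end

section
/- (Lemma 5, inequality (temp2).) If b_lb > 0 satisfies φ(b_lb) = P, then b_lb ≥ b_i·(b_i·P/(Q_i·F_i) + 1)⁻² for every i = 1, …, N; that is, b_lb ≥ max_i { b_i·(b_i·P/(Q_i·F_i) + 1)⁻² }. -/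
open Finset

/-- Lemma 5, inequality (temp2): If `b_lb > 0` satisfies `φ(b_lb) = P`,
then `b_lb ≥ b_i·(b_i·P/(Q_i·F_i) + 1)⁻²` for every `i = 1, …, N`. -/
theorem stmt_12 (N : ℕ) (hN : 1 ≤ N)
    (Q F G : ℕ → ℝ)
    (hQ : ∀ i ∈ Finset.Icc 1 N, 0 < Q i)
    (hF : ∀ i ∈ Finset.Icc 1 N, 0 < F i)
    (hG : ∀ i ∈ Finset.Icc 1 N, 0 < G i)
    (b : ℕ → ℝ) (hb : ∀ i, b i = Q i * F i * G i / (Q i * F i + 1))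
    (hord : ∀ i, 1 ≤ i → i < N → b (i + 1) ≤ b i)
    (P : ℝ) (hP : 0 < P)
    (φ : ℝ → ℝ)
    (hφ : ∀ x, φ x = ∑ i ∈ Finset.Icc 1 N,
      max 0 ((Q i * F i / Real.sqrt (b i)) * (1 / Real.sqrt x - 1 / Real.sqrt (b i))))
    (blb : ℝ) (hblb : 0 < blb) (heq : φ blb = P) :
    ∀ i ∈ Finset.Icc 1 N, b i * ((b i * P / (Q i * F i) + 1) ^ 2)⁻¹ ≤ blb := by
  intro i hi
  have hQi := hQ i hi
  have hFi := hF i hi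
  have hGi := hG i hi
  have hQF : 0 < Q i * F i := mul_pos hQi hFi
  have hbi : 0 < b i := by
    rw [hb i]; positivity
  -- single term ≤ P
  have hterm : (Q i * F i / Real.sqrt (b i)) * (1 / Real.sqrt blb - 1 / Real.sqrt (b i)) ≤ P := by
    have h2 : max 0 ((Q i * F i / Real.sqrt (b i)) * (1 / Real.sqrt blb - 1 / Real.sqrt (b i))) ≤
        ∑ j ∈ Finset.Icc 1 N,
          max 0 ((Q j * F j / Real.sqrt (b j)) * (1 / Real.sqrt blb - 1 / Real.sqrt (b j))) :=
      Finset.single_le_sum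
        (f := fun j => max 0 ((Q j * F j / Real.sqrt (b j)) * (1 / Real.sqrt blb - 1 / Real.sqrt (b j))))
        (fun j _ => le_max_left _ _) hi
    calc _ ≤ _ := le_max_right _ _
      _ ≤ _ := h2
      _ = φ blb := (hφ blb).symm
      _ = P := heq
  set sb := Real.sqrt (b i) with hsb
  set sl := Real.sqrt blb with hsl
  have hsbp : 0 < sb := Real.sqrt_pos.mpr hbi
  have hslp : 0 < sl := Real.sqrt_pos.mpr hblb
  have hsb2 : sb ^ 2 = b i := Real.sq_sqrt hbi.le
  have hsl2 : sl ^ 2 = blb := Real.sq_sqrt hblb.le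
  set c : ℝ := b i * P / (Q i * F i) + 1 with hc
  have hcpos : 0 < c := by positivity
  have h4 : Q i * F i * (sb - sl) ≤ P * b i * sl := by
    have h := mul_le_mul_of_nonneg_right hterm (show (0:ℝ) ≤ sb * sl * sb by positivity)
    have e1 : Q i * F i / sb * (1 / sl - 1 / sb) * (sb * sl * sb) = Q i * F i * (sb - sl) := by
      have e0 : (1 / sl - 1 / sb) * (sl * sb) = sb - sl := by field_simp
      have e0' : Q i * F i / sb * sb = Q i * F i := div_mul_cancel₀ _ hsbp.ne'
      calc Q i * F i / sb * (1 / sl - 1 / sb) * (sb * sl * sb)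
          = Q i * F i / sb * sb * ((1 / sl - 1 / sb) * (sl * sb)) := by ring
        _ = Q i * F i * (sb - sl) := by rw [e0, e0']
    have e2 : P * (sb * sl * sb) = P * b i * sl := by rw [← hsb2]; ring
    rw [e1, e2] at h; exact h
  have hQFc : Q i * F i * c = Q i * F i + P * b i := by rw [hc]; field_simp; ring
  have h6 : Q i * F i * sb ≤ Q i * F i * (c * sl) := by nlinarith [h4, hQFc]
  have key : sb ≤ c * sl := le_of_mul_le_mul_left h6 hQF
  have hfin : b i ≤ blb * c ^ 2 := by
    nlinarith [mul_le_mul key key hsbp.le (mul_nonneg hcpos.le hslp.le), hsb2, hsl2]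
  rw [mul_inv_le_iff₀ (by positivity)]
  linarith [hfin]
end

section
/- (Lemma: optimal price under small spread.) Suppose b_lb ∈ (0, b_1) satisfies φ(b_lb) = P, and suppose b_1 < 4·b_lb. Then for every λ ∈ [b_lb, b_1), the relay revenue satisfies λ·Σ_{j=1}^N max{0, (Q_j·F_j/√b_j)(1/√λ − 1/√b_j)} = λ·φ(λ) ≤ b_lb·P, with equality at λ = b_lb; i.e., the price b_lb maximizes λ·φ(λ) over [b_lb, b_1). -/
/-!
Multiplying out, `λ · φ(λ) = Σᵢ cᵢ · max 0 (√λ - λ / √bᵢ)` with `cᵢ = Qᵢ Fᵢ / √bᵢ ≥ 0`, and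
`t ↦ t - t² / √bᵢ` is decreasing for `t ≥ √bᵢ / 2`. Since `bᵢ ≤ b₁ < 4 b_lb`, every `√λ ≥ √b_lb`
lies in that range, so each summand of the revenue is largest at `λ = b_lb`, where it sums to
`b_lb · φ(b_lb) = b_lb · P`.
-/

open Finset Real

lemma antitoneOn_Icc_of_succ_le {b : ℕ → ℝ} {N : ℕ}
    (hord : ∀ i, 1 ≤ i → i < N → b (i + 1) ≤ b i) : AntitoneOn b (Set.Icc 1 N) :=
  antitoneOn_of_succ_le Set.ordConnected_Icc fun i _ hi hi' => by
    rw [Order.succ_eq_add_one] at hi' ⊢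
    exact hord i hi.1 (Nat.lt_of_succ_le hi'.2)

lemma mul_max_sqrt_le_of_le {a β x y : ℝ} (ha : 0 ≤ a) (hβ : β ≤ 4 * x) (hx : 0 < x)
    (hxy : x ≤ y) :
    y * max 0 (a / √β * (1 / √y - 1 / √β)) ≤ x * max 0 (a / √β * (1 / √x - 1 / √β)) := by
  rcases le_or_gt β 0 with hβ0 | hβ0
  · simp [Real.sqrt_eq_zero'.2 hβ0]
  set s := √β
  have hs : 0 < s := Real.sqrt_pos.2 hβ0
  have hy : 0 < y := hx.trans_le hxy
  have hrev : ∀ z, 0 < z → z * (1 / √z - 1 / s) = (√z * s - z) / s := fun z hz => by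
    have := Real.sqrt_pos.2 hz
    field_simp
    linear_combination (-s) * Real.mul_self_sqrt hz.le
  have hsx : s ≤ 2 * √x :=
    Real.sqrt_le_iff.2 ⟨by positivity, by rw [mul_pow, Real.sq_sqrt hx.le]; linarith⟩
  have hxy' : √x ≤ √y := Real.sqrt_le_sqrt hxy
  have key : √y * s - y ≤ √x * s - x := by
    nlinarith [mul_nonneg (sub_nonneg.2 hxy') (by linarith : 0 ≤ √y + √x - s),
      Real.sq_sqrt hx.le, Real.sq_sqrt hy.le]
  rw [mul_max_of_nonneg _ _ hy.le, mul_max_of_nonneg _ _ hx.le, mul_zero, mul_zero,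
    mul_left_comm, mul_left_comm x, hrev y hy, hrev x hx]
  gcongr

theorem stmt_17_general (N : ℕ)
    (Q F : ℕ → ℝ)
    (hQ : ∀ i ∈ Finset.Icc 1 N, 0 < Q i)
    (hF : ∀ i ∈ Finset.Icc 1 N, 0 < F i)
    (b : ℕ → ℝ)
    (hord : ∀ i, 1 ≤ i → i < N → b (i + 1) ≤ b i)
    (P : ℝ)
    (φ : ℝ → ℝ)
    (hφ : ∀ x, φ x = ∑ i ∈ Finset.Icc 1 N,
      max 0 ((Q i * F i / Real.sqrt (b i)) * (1 / Real.sqrt x - 1 / Real.sqrt (b i))))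
    (blb : ℝ) (hblb : blb ∈ Set.Ioo 0 (b 1)) (heq : φ blb = P)
    (hspread : b 1 < 4 * blb) :
    (∀ lam ∈ Set.Ico blb (b 1), lam * φ lam ≤ blb * P) ∧
    blb * φ blb = blb * P := by
  refine ⟨fun lam hlam => ?_, by rw [heq]⟩
  rw [← heq, hφ, hφ, mul_sum, mul_sum]
  refine sum_le_sum fun i hi => mul_max_sqrt_le_of_le ?_ ?_ hblb.1 hlam.1
  · exact (mul_pos (hQ i hi) (hF i hi)).le
  · have h1 : 1 ∈ Set.Icc 1 N := ⟨le_rfl, (mem_Icc.1 hi).1.trans (mem_Icc.1 hi).2⟩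
    have hbi : b i ≤ b 1 :=
      antitoneOn_Icc_of_succ_le hord h1 (by simpa using hi) (mem_Icc.1 hi).1
    linarith

/-- Lemma: optimal price under small spread: Suppose `b_lb ∈ (0, b_1)`
satisfies `φ(b_lb) = P`, and suppose `b_1 < 4·b_lb`. Then for every `λ ∈ [b_lb, b_1)`,
the relay revenue satisfies `λ·φ(λ) ≤ b_lb·P`, with equality at `λ = b_lb`; i.e., the
price `b_lb` maximizes `λ·φ(λ)` over `[b_lb, b_1)`. -/
theorem stmt_17 (N : ℕ) (hN : 1 ≤ N)
    (Q F G : ℕ → ℝ)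
    (hQ : ∀ i ∈ Finset.Icc 1 N, 0 < Q i)
    (hF : ∀ i ∈ Finset.Icc 1 N, 0 < F i)
    (hG : ∀ i ∈ Finset.Icc 1 N, 0 < G i)
    (b : ℕ → ℝ) (hb : ∀ i, b i = Q i * F i * G i / (Q i * F i + 1))
    (hord : ∀ i, 1 ≤ i → i < N → b (i + 1) ≤ b i)
    (P : ℝ) (hP : 0 < P)
    (φ : ℝ → ℝ)
    (hφ : ∀ x, φ x = ∑ i ∈ Finset.Icc 1 N,
      max 0 ((Q i * F i / Real.sqrt (b i)) * (1 / Real.sqrt x - 1 / Real.sqrt (b i))))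
    (blb : ℝ) (hblb : blb ∈ Set.Ioo 0 (b 1)) (heq : φ blb = P)
    (hspread : b 1 < 4 * blb) :
    (∀ lam ∈ Set.Ico blb (b 1), lam * φ lam ≤ blb * P) ∧
    blb * φ blb = blb * P :=
  stmt_17_general N Q F hQ hF b hord P φ hφ blb hblb heq hspread
end

section
/- (Low prices exhaust the relay power.) Suppose b_lb ∈ (0, b_1) satisfies φ(b_lb) = P, and for each user i and price λ > 0 define the ideal power demand P_i^I(λ) = max{0, min( (Q_i·F_i/√b_i)(1/√λ − 1/√b_i), P )}. Then for every λ with 0 < λ ≤ b_lb, one has Σ_{i=1}^N P_i^I(λ) ≥ P; consequently, if all relay power is sold at such prices, the relay revenue λ·P over (0, b_lb] is at most b_lb·P, attained at λ = b_lb. -/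
open Finset

/-- Low prices exhaust the relay power: Suppose `b_lb ∈ (0, b_1)`
satisfies `φ(b_lb) = P`, and for each user `i` and price `λ > 0` define the ideal power
demand `P_i^I(λ) = max{0, min( (Q_i·F_i/√b_i)(1/√λ − 1/√b_i), P )}`. Then for every `λ`
with `0 < λ ≤ b_lb`, one has `Σ_{i=1}^N P_i^I(λ) ≥ P`; consequently, if all relay power
is sold at such prices, the relay revenue `λ·P` over `(0, b_lb]` is at most `b_lb·P`,
attained at `λ = b_lb`. -/
theorem stmt_18 (N : ℕ) (hN : 1 ≤ N)
    (Q F G : ℕ → ℝ)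
    (hQ : ∀ i ∈ Finset.Icc 1 N, 0 < Q i)
    (hF : ∀ i ∈ Finset.Icc 1 N, 0 < F i)
    (hG : ∀ i ∈ Finset.Icc 1 N, 0 < G i)
    (b : ℕ → ℝ) (hb : ∀ i, b i = Q i * F i * G i / (Q i * F i + 1))
    (hord : ∀ i, 1 ≤ i → i < N → b (i + 1) ≤ b i)
    (P : ℝ) (hP : 0 < P)
    (φ : ℝ → ℝ)
    (hφ : ∀ x, φ x = ∑ i ∈ Finset.Icc 1 N,
      max 0 ((Q i * F i / Real.sqrt (b i)) * (1 / Real.sqrt x - 1 / Real.sqrt (b i))))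
    (blb : ℝ) (hblb : blb ∈ Set.Ioo 0 (b 1)) (heq : φ blb = P)
    (PI : ℕ → ℝ → ℝ)
    (hPIdef : ∀ i lam, PI i lam =
      max 0 (min ((Q i * F i / Real.sqrt (b i)) * (1 / Real.sqrt lam - 1 / Real.sqrt (b i))) P)) :
    (∀ lam : ℝ, 0 < lam → lam ≤ blb → P ≤ ∑ i ∈ Finset.Icc 1 N, PI i lam) ∧
    IsMaxOn (fun lam : ℝ => lam * P) (Set.Ioc 0 blb) blb := by
  constructor
  · intro lam hl hlb
    set t : ℕ → ℝ → ℝ := fun i x =>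
      (Q i * F i / Real.sqrt (b i)) * (1 / Real.sqrt x - 1 / Real.sqrt (b i)) with ht
    have hterm : ∀ i ∈ Finset.Icc 1 N, max 0 (t i blb) ≤ PI i lam := by
      intro i hi
      have hc : 0 ≤ Q i * F i / Real.sqrt (b i) := by
        apply div_nonneg (le_of_lt (mul_pos (hQ i hi) (hF i hi))) (Real.sqrt_nonneg _)
      have hmono : t i blb ≤ t i lam := by
        apply mul_le_mul_of_nonneg_left _ hc
        have h1 : Real.sqrt lam ≤ Real.sqrt blb := Real.sqrt_le_sqrt hlb
        have h2 : 0 < Real.sqrt lam := Real.sqrt_pos.mpr hl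
        have := one_div_le_one_div_of_le h2 h1
        linarith
      have htP : t i blb ≤ P := by
        have hle : max 0 (t i blb) ≤ ∑ j ∈ Finset.Icc 1 N, max 0 (t j blb) := by
          apply Finset.single_le_sum (fun j _ => le_max_left 0 (t j blb)) hi
        rw [← hφ blb] at hle
        exact le_trans (le_max_right _ _) (by linarith [heq ▸ hle])
      rw [hPIdef]
      exact max_le_max le_rfl (le_min hmono htP)
    calc P = φ blb := heq.symm
      _ = ∑ i ∈ Finset.Icc 1 N, max 0 (t i blb) := hφ blb
      _ ≤ ∑ i ∈ Finset.Icc 1 N, PI i lam := Finset.sum_le_sum hterm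
  · intro x hx
    exact mul_le_mul_of_nonneg_right hx.2 hP.le
end

section
/- (Theorem 1: optimal relay power price.) Suppose b_lb ∈ (0, b_1) satisfies φ(b_lb) = P, and let M be the index with b_M ≥ b_lb ≥ b_{M+1} (convention b_{N+1} = 0). For i = 1, …, M set γ_i = b_i and γ_{M+1} = b_lb, A_i = Σ_{j=1}^i Q_j·F_j/√b_j, B_i = Σ_{j=1}^i Q_j·F_j/b_j, c_i = (A_i/(2B_i))², and let λ_i = γ_{i+1} if c_i < γ_{i+1}, λ_i = γ_i if c_i > γ_i, and λ_i = c_i otherwise. Then the maximum of the relay revenue R(λ) = λ·Σ_{j=1}^N max{0, (Q_j·F_j/√b_j)(1/√λ − 1/√b_j)} over λ ∈ [b_lb, b_1] equals max_{i=1,…,M} { A_i·√λ_i − B_i·λ_i }, and it is attained at the λ_i achieving this maximum. -/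
open Finset

/-!
On the piece `[γ (i + 1), γ i]` exactly the users `1, …, i` have `b j ≥ λ`, so the revenue there is
`A i * √λ - B i * λ`, a concave quadratic in `√λ` with vertex `√(c i)`; its maximum over the piece
is therefore attained at the projection `lamopt i` of `c i` onto the piece. The pieces cover
`[blb, b 1]`, so the revenue is maximised at the best of the `lamopt i`.
-/

theorem sqrt_sub_linear_eq (A B x : ℝ) (hB : B ≠ 0) (hx : 0 ≤ x) :
    A * √x - B * x = A ^ 2 / (4 * B) - B * (√x - A / (2 * B)) ^ 2 := by
  have := Real.sq_sqrt hx
  field_simp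
  linear_combination (16 * B ^ 2) * this

theorem isMaxOn_sqrt_sub_linear_of_clamp {A B l r x₀ : ℝ} (hA : 0 ≤ A) (hB : 0 < B)
    (hl : 0 ≤ l) (hlr : l ≤ r)
    (hx₀ : x₀ = if (A / (2 * B)) ^ 2 < l then l
      else if r < (A / (2 * B)) ^ 2 then r else (A / (2 * B)) ^ 2) :
    x₀ ∈ Set.Icc l r ∧ IsMaxOn (fun x => A * √x - B * x) (Set.Icc l r) x₀ := by
  set s := A / (2 * B)
  have hs : 0 ≤ s := by positivity
  have hx₀_mem : x₀ ∈ Set.Icc l r := by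
    rw [hx₀]
    split_ifs with h₁ h₂
    · exact ⟨le_rfl, hlr⟩
    · exact ⟨hlr, le_rfl⟩
    · exact ⟨not_lt.1 h₁, not_lt.1 h₂⟩
  refine ⟨hx₀_mem, fun x hx => ?_⟩
  -- Completing the square: `√x₀` is the point of `[√l, √r]` closest to `s`.
  suffices (√x₀ - s) ^ 2 ≤ (√x - s) ^ 2 by
    simp only [Set.mem_ofPred_eq, sqrt_sub_linear_eq A B _ hB.ne' (hl.trans hx.1),
      sqrt_sub_linear_eq A B _ hB.ne' (hl.trans hx₀_mem.1)]
    gcongr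
  have hlx := Real.sqrt_le_sqrt hx.1
  have hxr := Real.sqrt_le_sqrt hx.2
  rw [hx₀]
  split_ifs with h₁ h₂
  · have : s ≤ √l := (Real.lt_sqrt hs).2 h₁ |>.le
    nlinarith
  · have : √r ≤ s := Real.sqrt_le_sqrt h₂.le |>.trans_eq (Real.sqrt_sq hs)
    nlinarith
  · simpa [Real.sqrt_sq hs] using sq_nonneg (√x - s)

-- For `b ≤ 0` the term vanishes through the junk values `√b = 0` and `a / 0 = 0`.
theorem max_zero_mul_inv_sqrt_sub_eq_zero {a b x : ℝ} (ha : 0 ≤ a) (hbx : b ≤ x) :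
    max 0 (a / √b * (1 / √x - 1 / √b)) = 0 := by
  refine max_eq_left ?_
  rcases le_or_gt b 0 with hb | hb
  · simp [Real.sqrt_eq_zero'.2 hb]
  · exact mul_nonpos_of_nonneg_of_nonpos (by positivity)
      (sub_nonpos.2 (one_div_le_one_div_of_le (Real.sqrt_pos.2 hb) (Real.sqrt_le_sqrt hbx)))

theorem mul_max_zero_mul_inv_sqrt_sub_eq {a b x : ℝ} (ha : 0 ≤ a) (hx : 0 < x) (hxb : x ≤ b) :
    x * max 0 (a / √b * (1 / √x - 1 / √b)) = a / √b * √x - a / b * x := by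
  rw [max_eq_right (mul_nonneg (by positivity)
    (sub_nonneg.2 (one_div_le_one_div_of_le (Real.sqrt_pos.2 hx) (Real.sqrt_le_sqrt hxb))))]
  obtain ⟨u, hu, rfl⟩ : ∃ u > 0, u ^ 2 = x := ⟨√x, Real.sqrt_pos.2 hx, Real.sq_sqrt hx.le⟩
  obtain ⟨v, hv, rfl⟩ : ∃ v > 0, v ^ 2 = b :=
    ⟨√b, Real.sqrt_pos.2 (hx.trans_le hxb), Real.sq_sqrt (hx.trans_le hxb).le⟩
  rw [Real.sqrt_sq hu.le, Real.sqrt_sq hv.le]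
  field_simp

theorem mul_sum_max_zero_mul_inv_sqrt_sub_eq {a b : ℕ → ℝ} {N i : ℕ} {x : ℝ} (hiN : i ≤ N)
    (ha : ∀ j ∈ Icc 1 N, 0 ≤ a j) (hx : 0 < x)
    (hlow : ∀ j ∈ Icc 1 i, x ≤ b j) (hhigh : ∀ j ∈ Icc (i + 1) N, b j ≤ x) :
    x * ∑ j ∈ Icc 1 N, max 0 (a j / √(b j) * (1 / √x - 1 / √(b j))) =
      (∑ j ∈ Icc 1 i, a j / √(b j)) * √x - (∑ j ∈ Icc 1 i, a j / b j) * x := by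
  have hsplit : Icc 1 N = Icc 1 i ∪ Icc (i + 1) N := by
    ext j; simp only [mem_Icc, mem_union]; omega
  have hdisj : Disjoint (Icc 1 i) (Icc (i + 1) N) := by
    simp only [disjoint_left, mem_Icc]; omega
  have hiN' : Icc 1 i ⊆ Icc 1 N := Icc_subset_Icc_right hiN
  rw [hsplit, sum_union hdisj, sum_eq_zero fun j hj =>
      max_zero_mul_inv_sqrt_sub_eq_zero (ha j (hsplit ▸ mem_union_right _ hj)) (hhigh j hj),
    add_zero, mul_sum, sum_mul, sum_mul, ← sum_sub_distrib]
  exact sum_congr rfl fun j hj => mul_max_zero_mul_inv_sqrt_sub_eq (ha j (hiN' hj)) hx (hlow j hj)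

theorem exists_mem_Icc_le_and_le {α : Type*} [LinearOrder α] {γ : ℕ → α} {M : ℕ} {x : α}
    (hM : 1 ≤ M) (h₁ : x ≤ γ 1) (hM₁ : γ (M + 1) ≤ x) :
    ∃ k ∈ Icc 1 M, γ (k + 1) ≤ x ∧ x ≤ γ k := by
  induction M, hM using Nat.le_induction with
  | base => exact ⟨1, by simp, hM₁, h₁⟩
  | succ M hM ih =>
    by_cases hx : γ (M + 1) ≤ x
    · obtain ⟨k, hk, hxk⟩ := ih hx
      exact ⟨k, Icc_subset_Icc_right (by omega) hk, hxk⟩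
    · exact ⟨M + 1, by simp, hM₁, (not_le.1 hx).le⟩

theorem antitoneOn_Icc_one_of_succ_le {α : Type*} [Preorder α] {f : ℕ → α} {N : ℕ}
    (hf : ∀ j, 1 ≤ j → j < N → f (j + 1) ≤ f j) : AntitoneOn f (Set.Icc 1 N) :=
  antitoneOn_of_succ_le Set.ordConnected_Icc fun j _ hj hj₁ =>
    hf j hj.1 (Order.succ_le_iff.1 hj₁.2)

theorem exists_isMaxOn_of_piecewise {α β : Type*} [LinearOrder α] [LinearOrder β]
    {R : α → β} {f : ℕ → α → β} {γ x : ℕ → α} {M : ℕ}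
    (hM : 1 ≤ M) (hR : ∀ i ∈ Icc 1 M, ∀ y ∈ Set.Icc (γ (i + 1)) (γ i), R y = f i y)
    (hx : ∀ i ∈ Icc 1 M,
      x i ∈ Set.Icc (γ (i + 1)) (γ i) ∧ IsMaxOn (f i) (Set.Icc (γ (i + 1)) (γ i)) (x i)) :
    ∃ i ∈ Icc 1 M, (∀ j ∈ Icc 1 M, f j (x j) ≤ f i (x i)) ∧
      IsMaxOn R (Set.Icc (γ (M + 1)) (γ 1)) (x i) ∧ R (x i) = f i (x i) := by
  obtain ⟨i, hi, hmax⟩ := exists_max_image (Icc 1 M) (fun j => f j (x j)) ⟨1, by simp [hM]⟩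
  refine ⟨i, hi, hmax, fun y hy => ?_, hR i hi _ (hx i hi).1⟩
  obtain ⟨k, hk, hyk⟩ := exists_mem_Icc_le_and_le hM hy.2 hy.1
  calc R y = f k y := hR k hk y hyk
    _ ≤ f k (x k) := (hx k hk).2 hyk
    _ ≤ f i (x i) := hmax k hk
    _ = R (x i) := (hR i hi _ (hx i hi).1).symm

section Breakpoints

variable {b γ : ℕ → ℝ} {N M : ℕ} {blb : ℝ}

theorem antitoneOn_breakpoints (hb : AntitoneOn b (Set.Icc 1 N)) (hMN : M ≤ N)
    (hMlow : blb ≤ b M) (hγ : ∀ i, γ i = if i = M + 1 then blb else b i) :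
    AntitoneOn γ (Set.Icc 1 (M + 1)) :=
  antitoneOn_Icc_one_of_succ_le fun k hk hkM => by
    rw [hγ (k + 1), hγ k, if_neg (show k ≠ M + 1 by omega)]
    split_ifs with hk'
    · obtain rfl : k = M := by omega
      exact hMlow
    · exact hb ⟨hk, by omega⟩ ⟨by omega, by omega⟩ k.le_succ

theorem breakpoint_le_of_le (hb : AntitoneOn b (Set.Icc 1 N)) (hMN : M ≤ N)
    (hγ : ∀ i, γ i = if i = M + 1 then blb else b i)
    {i j : ℕ} (hi : i ∈ Icc 1 M) (hj : j ∈ Icc 1 i) : γ i ≤ b j := by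
  simp only [mem_Icc] at hi hj
  rw [hγ, if_neg (by omega)]
  exact hb ⟨hj.1, by omega⟩ ⟨hi.1, by omega⟩ hj.2

theorem le_breakpoint_succ_of_lt (hb : AntitoneOn b (Set.Icc 1 N))
    (hMhigh : (if M < N then b (M + 1) else 0) ≤ blb)
    (hγ : ∀ i, γ i = if i = M + 1 then blb else b i)
    {i j : ℕ} (hi : i ∈ Icc 1 M) (hj : j ∈ Icc (i + 1) N) : b j ≤ γ (i + 1) := by
  simp only [mem_Icc] at hi hj
  refine (hb ⟨by omega, by omega⟩ ⟨by omega, hj.2⟩ hj.1).trans ?_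
  rw [hγ]
  split_ifs with hiM
  · simpa [hiM, show M < N by omega] using hMhigh
  · rfl

end Breakpoints

theorem stmt_19_general (N : ℕ)
    (Q F : ℕ → ℝ)
    (hQ : ∀ j ∈ Finset.Icc 1 N, 0 < Q j)
    (hF : ∀ j ∈ Finset.Icc 1 N, 0 < F j)
    (b : ℕ → ℝ)
    (hord : ∀ j, 1 ≤ j → j < N → b (j + 1) ≤ b j)
    (blb : ℝ) (hblb : blb ∈ Set.Ioo 0 (b 1))
    (M : ℕ) (hM1 : 1 ≤ M) (hMN : M ≤ N)
    (hMlow : blb ≤ b M) (hMhigh : (if M < N then b (M + 1) else 0) ≤ blb)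
    (γ : ℕ → ℝ) (hγ : ∀ i, γ i = if i = M + 1 then blb else b i)
    (A B c lamopt : ℕ → ℝ)
    (hA : ∀ i, A i = ∑ j ∈ Finset.Icc 1 i, Q j * F j / Real.sqrt (b j))
    (hB : ∀ i, B i = ∑ j ∈ Finset.Icc 1 i, Q j * F j / b j)
    (hc : ∀ i, c i = (A i / (2 * B i)) ^ 2)
    (hlamopt : ∀ i, lamopt i =
      if c i < γ (i + 1) then γ (i + 1) else if γ i < c i then γ i else c i)
    (R : ℝ → ℝ)
    (hR : ∀ x, R x = x * ∑ j ∈ Finset.Icc 1 N,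
      max 0 ((Q j * F j / Real.sqrt (b j)) * (1 / Real.sqrt x - 1 / Real.sqrt (b j)))) :
    ∃ i ∈ Finset.Icc 1 M,
      (∀ j ∈ Finset.Icc 1 M,
        A j * Real.sqrt (lamopt j) - B j * lamopt j
          ≤ A i * Real.sqrt (lamopt i) - B i * lamopt i) ∧
      IsMaxOn R (Set.Icc blb (b 1)) (lamopt i) ∧
      R (lamopt i) = A i * Real.sqrt (lamopt i) - B i * lamopt i := by
  have hb := antitoneOn_Icc_one_of_succ_le hord
  have hγanti := antitoneOn_breakpoints hb hMN hMlow hγ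
  have hγM : γ (M + 1) = blb := by rw [hγ, if_pos rfl]
  have hγ1 : γ 1 = b 1 := by rw [hγ, if_neg (by omega)]
  have hγ_succ_le : ∀ i ∈ Icc 1 M, γ (i + 1) ≤ γ i := fun i hi =>
    hγanti (by grind) (by grind) (by omega)
  have hγ_succ_pos : ∀ i ∈ Icc 1 M, 0 < γ (i + 1) := fun i hi =>
    hblb.1.trans_le (hγM ▸ hγanti (by grind) (by grind) (by grind))
  have hb_pos : ∀ j ∈ Icc 1 M, 0 < b j := fun j hj =>
    (hγ_succ_pos M (by grind)).trans_le <|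
      (hγ_succ_le M (by grind)).trans (breakpoint_le_of_le hb hMN hγ (by grind) hj)
  have hQF : ∀ j ∈ Icc 1 N, 0 < Q j * F j := fun j hj => mul_pos (hQ j hj) (hF j hj)
  have hpiece : ∀ i ∈ Icc 1 M, ∀ x ∈ Set.Icc (γ (i + 1)) (γ i),
      R x = A i * √x - B i * x := fun i hi x hx => by
    rw [hR, hA, hB]
    exact mul_sum_max_zero_mul_inv_sqrt_sub_eq (a := fun j => Q j * F j) (by grind)
      (fun j hj => (hQF j hj).le) ((hγ_succ_pos i hi).trans_le hx.1)
      (fun j hj => hx.2.trans (breakpoint_le_of_le hb hMN hγ hi hj))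
      (fun j hj => (le_breakpoint_succ_of_lt hb hMhigh hγ hi hj).trans hx.1)
  have hopt : ∀ i ∈ Icc 1 M, lamopt i ∈ Set.Icc (γ (i + 1)) (γ i) ∧
      IsMaxOn (fun x => A i * √x - B i * x) (Set.Icc (γ (i + 1)) (γ i)) (lamopt i) := by
    intro i hi
    refine isMaxOn_sqrt_sub_linear_of_clamp ?_ ?_ (hγ_succ_pos i hi).le (hγ_succ_le i hi)
      (by rw [hlamopt, hc])
    · rw [hA]
      exact sum_nonneg fun j hj => div_nonneg (hQF j (by grind)).le (Real.sqrt_nonneg _)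
    · rw [hB]
      exact sum_pos (fun j hj => div_pos (hQF j (by grind)) (hb_pos j (by grind))) ⟨1, by grind⟩
  simpa only [hγM, hγ1] using exists_isMaxOn_of_piecewise hM1 hpiece hopt

/-- Theorem 1: optimal relay power price: Suppose `b_lb ∈ (0, b_1)`
satisfies `φ(b_lb) = P`, and let `M` be the index with `b_M ≥ b_lb ≥ b_{M+1}` (with the
convention `b_{N+1} = 0`). For `i = 1, …, M` set `γ_i = b_i` and `γ_{M+1} = b_lb`,
`A_i = Σ_{j=1}^i Q_j·F_j/√b_j`, `B_i = Σ_{j=1}^i Q_j·F_j/b_j`, `c_i = (A_i/(2B_i))²`,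
and let `λ_i = γ_{i+1}` if `c_i < γ_{i+1}`, `λ_i = γ_i` if `c_i > γ_i`, and `λ_i = c_i`
otherwise. Then the maximum of the relay revenue
`R(λ) = λ·Σ_{j=1}^N max{0, (Q_j·F_j/√b_j)(1/√λ − 1/√b_j)}` over `λ ∈ [b_lb, b_1]`
equals `max_{i=1,…,M} { A_i·√λ_i − B_i·λ_i }`, attained at the `λ_i` achieving this
maximum. -/
theorem stmt_19 (N : ℕ) (hN : 1 ≤ N)
    (Q F G : ℕ → ℝ)
    (hQ : ∀ j ∈ Finset.Icc 1 N, 0 < Q j)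
    (hF : ∀ j ∈ Finset.Icc 1 N, 0 < F j)
    (hG : ∀ j ∈ Finset.Icc 1 N, 0 < G j)
    (b : ℕ → ℝ) (hb : ∀ j, b j = Q j * F j * G j / (Q j * F j + 1))
    (hord : ∀ j, 1 ≤ j → j < N → b (j + 1) ≤ b j)
    (P : ℝ) (hP : 0 < P)
    (φ : ℝ → ℝ)
    (hφ : ∀ x, φ x = ∑ j ∈ Finset.Icc 1 N,
      max 0 ((Q j * F j / Real.sqrt (b j)) * (1 / Real.sqrt x - 1 / Real.sqrt (b j))))
    (blb : ℝ) (hblb : blb ∈ Set.Ioo 0 (b 1)) (heq : φ blb = P)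
    (M : ℕ) (hM1 : 1 ≤ M) (hMN : M ≤ N)
    (hMlow : blb ≤ b M) (hMhigh : (if M < N then b (M + 1) else 0) ≤ blb)
    (γ : ℕ → ℝ) (hγ : ∀ i, γ i = if i = M + 1 then blb else b i)
    (A B c lamopt : ℕ → ℝ)
    (hA : ∀ i, A i = ∑ j ∈ Finset.Icc 1 i, Q j * F j / Real.sqrt (b j))
    (hB : ∀ i, B i = ∑ j ∈ Finset.Icc 1 i, Q j * F j / b j)
    (hc : ∀ i, c i = (A i / (2 * B i)) ^ 2)
    (hlamopt : ∀ i, lamopt i =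
      if c i < γ (i + 1) then γ (i + 1) else if γ i < c i then γ i else c i)
    (R : ℝ → ℝ)
    (hR : ∀ x, R x = x * ∑ j ∈ Finset.Icc 1 N,
      max 0 ((Q j * F j / Real.sqrt (b j)) * (1 / Real.sqrt x - 1 / Real.sqrt (b j)))) :
    ∃ i ∈ Finset.Icc 1 M,
      (∀ j ∈ Finset.Icc 1 M,
        A j * Real.sqrt (lamopt j) - B j * lamopt j
          ≤ A i * Real.sqrt (lamopt i) - B i * lamopt i) ∧
      IsMaxOn R (Set.Icc blb (b 1)) (lamopt i) ∧
      R (lamopt i) = A i * Real.sqrt (lamopt i) - B i * lamopt i :=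
  stmt_19_general N Q F hQ hF b hord blb hblb M hM1 hMN hMlow hMhigh γ hγ A B c lamopt hA hB hc
    hlamopt R hR
end
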